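/- arXiv:2409.04695 — 6 statements merged into one kernel-verified Lean document; each statement's English description precedes it below -/
import Mathlib

section
/- Let p be an odd prime and let s be a unit modulo 2p with s ≢ 1 (mod 2p). Then for every even residue t modulo 2p with t ≢ 0 (mod 2p), there exists a unique unit x modulo 2p such that x - s·x ≡ t (mod 2p). -/
theorem stmt0 (p : ℕ) (hp : p.Prime) (hodd : Odd p)
    (s : (ZMod (2 * p))ˣ) (hs : (s : ZMod (2 * p)) ≠ 1) :
    ∀ t : ZMod (2 * p), Even t → t ≠ 0 →
      ∃! x : (ZMod (2 * p))ˣ, (x : ZMod (2 * p)) - (s : ZMod (2 * p)) * x = t := by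
  intro t ht ht0
  haveI := Fact.mk hp
  have hp2 : p ≠ 2 := by
    rintro rfl
    exact (Nat.not_odd_iff_even.mpr even_two) hodd
  have hcop : Nat.Coprime 2 p := (Nat.coprime_primes Nat.prime_two hp).mpr (Ne.symm hp2)
  set e : ZMod (2*p) ≃+* ZMod 2 × ZMod p := ZMod.chineseRemainder hcop with he
  have hmod2 : ∀ a : ZMod 2, a ≠ 0 → a = 1 := by decide
  have hadd2 : ∀ a : ZMod 2, a + a = 0 := by decide
  have hunit1 : ∀ u : (ZMod (2*p))ˣ, (e (u : ZMod (2*p))).1 = 1 := by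
    intro u
    have h1 : IsUnit (e (u : ZMod (2*p))) := u.isUnit.map e.toRingHom
    have h2 : IsUnit (e (u : ZMod (2*p))).1 := h1.map (RingHom.fst _ _)
    exact hmod2 _ h2.ne_zero
  -- first component of e t is 0
  obtain ⟨r, hr⟩ := ht
  have het1 : (e t).1 = 0 := by
    rw [hr, map_add]
    exact hadd2 _
  have het2 : (e t).2 ≠ 0 := by
    intro h
    apply ht0
    have : e t = 0 := Prod.ext het1 h
    have := e.injective (this.trans (map_zero e).symm)
    exact this
  set s2 : ZMod p := (e (s : ZMod (2*p))).2 with hs2def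
  have hs2 : s2 ≠ 1 := by
    intro h
    apply hs
    have : e (s : ZMod (2*p)) = e 1 := by
      rw [map_one]
      exact Prod.ext (hunit1 s) h
    exact e.injective this
  set u1 : ZMod p := 1 - s2 with hu1def
  have hu1 : u1 ≠ 0 := sub_ne_zero.mpr (Ne.symm hs2)
  set b : ZMod p := (e t).2 * u1⁻¹ with hbdef
  set x0 : ZMod (2*p) := e.symm (1, b) with hx0def
  have hex0 : e x0 = (1, b) := e.apply_symm_apply _
  have hbne : b ≠ 0 := mul_ne_zero het2 (inv_ne_zero hu1)
  have hux0 : IsUnit x0 := by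
    apply IsUnit.of_mul_eq_one (a := x0) (e.symm (1, b⁻¹))
    apply e.injective
    rw [map_mul, hex0, e.apply_symm_apply, map_one]
    ext
    · simp
    · simp [mul_inv_cancel₀ hbne]
  have hb_eq : b * u1 = (e t).2 := by
    rw [hbdef]
    field_simp
  refine ⟨hux0.unit, ?_, ?_⟩
  · show (hux0.unit : ZMod (2*p)) - (s : ZMod (2*p)) * hux0.unit = t
    rw [hux0.unit_spec]
    apply e.injective
    rw [map_sub, map_mul, hex0]
    have hes1 : (e (s : ZMod (2*p))).1 = 1 := hunit1 s
    ext
    · show (1 : ZMod 2) - (e (s : ZMod (2*p))).1 * 1 = (e t).1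
      rw [hes1, het1]; ring
    · show b - s2 * b = (e t).2
      rw [← hb_eq, hu1def]; ring
  · intro y hy
    apply Units.ext
    show (y : ZMod (2*p)) = hux0.unit
    rw [hux0.unit_spec]
    apply e.injective
    rw [hex0]
    have h' : e (y : ZMod (2*p)) - e (s : ZMod (2*p)) * e (y : ZMod (2*p)) = e t := by
      rw [← map_mul, ← map_sub, hy]
    have h2 : (e (y : ZMod (2*p))).2 - s2 * (e (y : ZMod (2*p))).2 = (e t).2 :=
      congrArg Prod.snd h'
    have h3 : (e (y : ZMod (2*p))).2 * u1 = (e t).2 := by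
      rw [hu1def]; linear_combination h2
    have h4 : (e (y : ZMod (2*p))).2 = b := by
      rw [hbdef, eq_comm, mul_inv_eq_iff_eq_mul₀ hu1, ← h3, mul_comm]
    exact Prod.ext (hunit1 y) h4
end

section
/- Let p be an odd prime. The map from (ℤ/2pℤ)ˣ to ℤ/2pℤ sending a unit x to x - s·x, where s is a fixed unit with s ≢ 1 (mod 2p), is injective. -/
theorem stmt2 (p : ℕ) (hp : p.Prime) (hodd : Odd p)
    (s : (ZMod (2 * p))ˣ) (hs : (s : ZMod (2 * p)) ≠ 1) :
    Function.Injective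
      (fun x : (ZMod (2 * p))ˣ => (x : ZMod (2 * p)) - (s : ZMod (2 * p)) * x) := by
  haveI : Fact p.Prime := ⟨hp⟩
  have hp0 : 0 < p := hp.pos
  haveI : NeZero (2 * p) := ⟨by positivity⟩
  set f2 := ZMod.castHom (dvd_mul_right 2 p) (ZMod 2) with hf2
  set fp := ZMod.castHom (dvd_mul_left p 2) (ZMod p) with hfp
  -- zero criterion
  have hzero : ∀ a : ZMod (2 * p), f2 a = 0 → fp a = 0 → a = 0 := by
    intro a h2 hpp
    have hv : ((a.val : ℕ) : ZMod (2 * p)) = a := ZMod.natCast_zmod_val a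
    have d2 : 2 ∣ a.val := by
      rw [← ZMod.natCast_eq_zero_iff]
      rw [← hv] at h2; simpa [hf2] using h2
    have dp : p ∣ a.val := by
      rw [← ZMod.natCast_eq_zero_iff]
      rw [← hv] at hpp; simpa [hfp] using hpp
    have : 2 * p ∣ a.val := Nat.Coprime.mul_dvd_of_dvd_of_dvd
      (Nat.coprime_two_left.mpr hodd) d2 dp
    rw [← hv, ZMod.natCast_eq_zero_iff]; exact this
  -- units map to 1 in ZMod 2
  have hone : ∀ x : (ZMod (2 * p))ˣ, f2 (x : ZMod (2 * p)) = 1 := by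
    intro x
    have : (Units.map (f2 : ZMod (2*p) →* ZMod 2) x) = 1 := Subsingleton.elim _ _
    have := congrArg (Units.val) this
    simpa using this
  -- s ≠ 1 mod p
  have hsp : fp (s : ZMod (2 * p)) ≠ 1 := by
    intro h1
    apply hs
    have : (s : ZMod (2 * p)) - 1 = 0 := by
      apply hzero
      · simp [map_sub, hone s]
      · simp [map_sub, h1]
    exact sub_eq_zero.mp this
  intro x y h
  simp only at h
  apply Units.ext
  have key : (1 - (s : ZMod (2 * p))) * ((x : ZMod (2 * p)) - y) = 0 := by
    linear_combination h
  have e2 : f2 ((x : ZMod (2 * p)) - y) = 0 := by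
    simp [map_sub, hone x, hone y]
  have ep : fp ((x : ZMod (2 * p)) - y) = 0 := by
    have := congrArg fp key
    rw [map_mul, map_sub, map_sub, map_one, map_zero] at this
    rcases mul_eq_zero.mp this with h' | h'
    · exact absurd (sub_eq_zero.mp h').symm hsp
    · rw [map_sub]; exact h'
  have := hzero _ e2 ep
  exact sub_eq_zero.mp this
end

section
/- Let p be an odd prime and let s be a unit modulo 2p with s ≢ 1 (mod 2p). If the multiplicative order m of s in (ℤ/2pℤ)ˣ is odd, then 1 + s + s² + ⋯ + s^{m-1} ≡ p (mod 2p), and consequently 1 + s + ⋯ + s^{2m-1} ≡ 0 (mod 2p). -/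
theorem stmt8 (p : ℕ) (hp : p.Prime) (hodd : Odd p)
    (s : (ZMod (2 * p))ˣ) (hs : (s : ZMod (2 * p)) ≠ 1)
    (hm : Odd (orderOf s)) :
    ∑ k ∈ Finset.range (orderOf s), (s : ZMod (2 * p)) ^ k = (p : ZMod (2 * p)) ∧
    ∑ k ∈ Finset.range (2 * orderOf s), (s : ZMod (2 * p)) ^ k = 0 := by
  haveI : Fact p.Prime := ⟨hp⟩
  have hcop : Nat.Coprime 2 p := hodd.coprime_two_left
  set m := orderOf s with hmdef
  have hsm : (s : ZMod (2 * p)) ^ m = 1 := by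
    rw [← Units.val_pow_eq_pow_val, pow_orderOf_eq_one, Units.val_one]
  set e := ZMod.chineseRemainder hcop with hedef
  set f2 : ZMod (2 * p) →+* ZMod 2 :=
    (RingHom.fst (ZMod 2) (ZMod p)).comp (e : ZMod (2 * p) →+* ZMod 2 × ZMod p) with hf2
  set fp : ZMod (2 * p) →+* ZMod p :=
    (RingHom.snd (ZMod 2) (ZMod p)).comp (e : ZMod (2 * p) →+* ZMod 2 × ZMod p) with hfp
  have he : ∀ x : ZMod (2 * p), e x = (f2 x, f2 x).map id (fun _ => fp x) := fun x => rfl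
  have he' : ∀ x : ZMod (2 * p), e x = (f2 x, fp x) := fun x => rfl
  -- component mod 2 of s is 1
  have hu2 : ∀ u : (ZMod 2)ˣ, (u : ZMod 2) = 1 := by decide
  have hs2 : f2 (s : ZMod (2 * p)) = 1 := by
    have := hu2 (Units.map f2.toMonoidHom s)
    simpa using this
  -- component mod p of s
  set t : ZMod p := fp (s : ZMod (2 * p)) with htdef
  have htm : t ^ m = 1 := by rw [htdef, ← map_pow, hsm, map_one]
  have ht1 : t ≠ 1 := by
    intro h
    apply hs
    apply e.injective
    rw [he', he', map_one, map_one, hs2, ← htdef, h]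
  have hm2 : (m : ZMod 2) = 1 := by
    rw [← ZMod.natCast_mod, Nat.odd_iff.mp hm, Nat.cast_one]
  have hp2 : ((p : ℕ) : ZMod 2) = 1 := by
    rw [← ZMod.natCast_mod, Nat.odd_iff.mp hodd, Nat.cast_one]
  have key : ∑ k ∈ Finset.range m, (s : ZMod (2 * p)) ^ k = (p : ZMod (2 * p)) := by
    apply e.injective
    rw [he', he']
    apply Prod.ext
    · simp only [map_sum, map_pow, map_natCast, hs2, hp2, one_pow]
      simpa using hm2
    · simp only [map_sum, map_pow, map_natCast, ← htdef]
      rw [geom_sum_eq ht1, htm, ZMod.natCast_self]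
      simp
  refine ⟨key, ?_⟩
  rw [show 2 * m = m + m from two_mul m, Finset.sum_range_add]
  simp only [pow_add, hsm, one_mul]
  rw [key]
  have h0 : ((2 * p : ℕ) : ZMod (2 * p)) = 0 := ZMod.natCast_self _
  push_cast at h0
  linear_combination h0
end

section
/- Let T_{4p} be the dicyclic group of order 4p with p an odd prime. Then the automorphism group Aut(T_{4p}) has order 2p(p-1). -/
namespace Stmt12Aux

open QuaternionGroup

variable {p : ℕ}

lemma unit_val_odd [NeZero p] (s : (ZMod (2*p))ˣ) : Odd ((s : ZMod (2*p)).val) := by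
  have h := ZMod.val_coe_unit_coprime s
  rw [Nat.odd_iff, ← Nat.not_even_iff]
  intro he
  have h2 : (2 : ℕ) ∣ Nat.gcd ((s : ZMod (2*p)).val) (2*p) :=
    Nat.dvd_gcd he.two_dvd ⟨p, rfl⟩
  rw [h] at h2
  omega

lemma unit_mul_p [NeZero p] (s : (ZMod (2*p))ˣ) :
    (s : ZMod (2*p)) * (p : ZMod (2*p)) = (p : ZMod (2*p)) := by
  obtain ⟨m, hm⟩ := unit_val_odd s
  conv_lhs => rw [← ZMod.natCast_zmod_val (s : ZMod (2*p))]
  rw [← Nat.cast_mul, hm, show (2*m+1)*p = m*(2*p)+p by ring, Nat.cast_add, Nat.cast_mul,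
    ZMod.natCast_self, mul_zero, zero_add]

/-- The underlying function of the automorphism α_{s,t}. -/
def fn (s t : ZMod (2*p)) : QuaternionGroup p → QuaternionGroup p
  | .a i => .a (s * i)
  | .xa j => .xa (s * j + t)

lemma fn_mul [NeZero p] (s : (ZMod (2*p))ˣ) (t : ZMod (2*p)) (x y : QuaternionGroup p) :
    fn (s : ZMod (2*p)) t (x * y) = fn (s : ZMod (2*p)) t x * fn (s : ZMod (2*p)) t y := by
  rcases x with i | i <;> rcases y with j | j <;>
    simp only [fn, a_mul_a, a_mul_xa, xa_mul_a, xa_mul_xa] <;> congr 1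
  · ring
  · ring
  · ring
  · rw [mul_sub, mul_add, unit_mul_p]; ring

/-- The automorphism α_{s,t}. -/
def aut [NeZero p] (s : (ZMod (2*p))ˣ) (t : ZMod (2*p)) : MulAut (QuaternionGroup p) where
  toFun := fn (s : ZMod (2*p)) t
  invFun := fn ((s⁻¹ : (ZMod (2*p))ˣ) : ZMod (2*p)) (-((s⁻¹ : (ZMod (2*p))ˣ) : ZMod (2*p)) * t)
  left_inv x := by
    have h : ((s⁻¹ : (ZMod (2*p))ˣ) : ZMod (2*p)) * (s : ZMod (2*p)) = 1 := by
      rw [← Units.val_mul, inv_mul_cancel, Units.val_one]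
    rcases x with i | i <;> simp only [fn] <;> congr 1
    · rw [← mul_assoc, h, one_mul]
    · rw [mul_add, ← mul_assoc, h, one_mul]; ring
  right_inv x := by
    have h : (s : ZMod (2*p)) * ((s⁻¹ : (ZMod (2*p))ˣ) : ZMod (2*p)) = 1 := by
      rw [← Units.val_mul, mul_inv_cancel, Units.val_one]
    rcases x with i | i <;> simp only [fn] <;> congr 1
    · rw [← mul_assoc, h, one_mul]
    · rw [mul_add, neg_mul, mul_neg, ← mul_assoc, ← mul_assoc, h, one_mul, one_mul]; ring
  map_mul' := fn_mul s t

lemma aut_apply_a [NeZero p] (s : (ZMod (2*p))ˣ) (t i : ZMod (2*p)) :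
    aut s t (.a i) = .a ((s : ZMod (2*p)) * i) := rfl

lemma aut_apply_xa [NeZero p] (s : (ZMod (2*p))ˣ) (t j : ZMod (2*p)) :
    aut s t (.xa j) = .xa ((s : ZMod (2*p)) * j + t) := rfl

lemma aut_bijective [NeZero p] (hp : p.Prime) (hodd : Odd p) :
    Function.Bijective (fun st : (ZMod (2*p))ˣ × ZMod (2*p) =>
      aut (p := p) st.1 st.2) := by
  constructor
  · rintro ⟨s, t⟩ ⟨s', t'⟩ h
    simp only at h
    have h1 := congrArg (fun f : MulAut (QuaternionGroup p) => f (.a 1)) h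
    have h2 := congrArg (fun f : MulAut (QuaternionGroup p) => f (.xa 0)) h
    simp only [aut_apply_a, aut_apply_xa, mul_one, mul_zero, zero_add] at h1 h2
    have hs : (s : ZMod (2*p)) = (s' : ZMod (2*p)) := QuaternionGroup.a.inj h1
    have ht : t = t' := QuaternionGroup.xa.inj h2
    exact Prod.ext (Units.ext hs) ht
  · intro f
    have hord : orderOf (f (.a 1)) = 2 * p := by
      rw [MulEquiv.orderOf_eq, orderOf_a_one]
    -- f (a 1) = a σ for some σ
    obtain ⟨σ, hσ⟩ : ∃ σ, f (.a 1) = .a σ := by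
      rcases hfa : f (.a 1 : QuaternionGroup p) with i | i
      · exact ⟨i, rfl⟩
      · exfalso
        rw [hfa, orderOf_xa] at hord
        have : p = 2 := by omega
        rw [this] at hodd
        exact (Nat.not_odd_iff_even.mpr (by norm_num)) hodd
    -- σ is a unit
    have hcop : Nat.Coprime (σ.val) (2*p) := by
      rw [hσ, orderOf_a] at hord
      have hg : Nat.gcd (2*p) σ.val ∣ 2*p := Nat.gcd_dvd_left _ _
      have h2p : 2*p ≠ 0 := by have := hp.pos; omega
      have : Nat.gcd (2*p) σ.val = 1 := by
        rcases (Nat.div_eq_self.mp hord) with h | h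
        · exact absurd h h2p
        · exact h
      exact Nat.coprime_comm.mp this
    set s : (ZMod (2*p))ˣ := ZMod.unitOfCoprime σ.val hcop with hs_def
    have hs : (s : ZMod (2*p)) = σ := by
      rw [hs_def, ZMod.coe_unitOfCoprime, ZMod.natCast_zmod_val]
    -- f (xa 0) = xa t for some t
    obtain ⟨t, ht⟩ : ∃ t, f (.xa 0) = .xa t := by
      rcases hfx : f (.xa 0 : QuaternionGroup p) with i | i
      · exfalso
        have h4 : orderOf (f (.xa 0 : QuaternionGroup p)) = 4 := by
          rw [MulEquiv.orderOf_eq, orderOf_xa]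
        rw [hfx, orderOf_a] at h4
        have hdvd : (2*p) / Nat.gcd (2*p) i.val ∣ 2 * p :=
          Nat.div_dvd_of_dvd (Nat.gcd_dvd_left _ _)
        rw [h4] at hdvd
        obtain ⟨k, hk⟩ := hodd
        obtain ⟨m, hm⟩ := hdvd
        omega
      · exact ⟨i, rfl⟩
    have hfa : ∀ i, f (.a i) = .a (σ * i) := by
      intro i
      have h1 : (.a i : QuaternionGroup p) = (.a 1) ^ i.val := by
        rw [a_one_pow, ZMod.natCast_zmod_val]
      rw [h1, map_pow, hσ]
      conv_lhs => rw [← ZMod.natCast_zmod_val σ, ← a_one_pow, ← pow_mul, a_one_pow]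
      rw [Nat.cast_mul, ZMod.natCast_zmod_val, ZMod.natCast_zmod_val]
    refine ⟨⟨s, t⟩, ?_⟩
    ext x
    rcases x with i | i
    · rw [show (fun st : (ZMod (2*p))ˣ × ZMod (2*p) => aut (p := p) st.1 st.2) (s, t) = aut s t
        from rfl, aut_apply_a, hs, hfa]
    · rw [show (fun st : (ZMod (2*p))ˣ × ZMod (2*p) => aut (p := p) st.1 st.2) (s, t) = aut s t
        from rfl, aut_apply_xa, hs]
      have h0 : (.xa i : QuaternionGroup p) = .xa 0 * .a i := by rw [xa_mul_a, zero_add]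
      rw [h0, map_mul, ht, hfa, xa_mul_a, add_comm]

end Stmt12Aux

theorem stmt12 (p : ℕ) (hp : p.Prime) (hodd : Odd p) :
    Nat.card (MulAut (QuaternionGroup p)) = 2 * p * (p - 1) := by
  haveI : NeZero p := ⟨hp.pos.ne'⟩
  have e := Equiv.ofBijective _ (Stmt12Aux.aut_bijective hp hodd)
  rw [← Nat.card_congr e, Nat.card_prod, Nat.card_eq_fintype_card, Nat.card_eq_fintype_card,
    ZMod.card_units_eq_totient, ZMod.card,
    Nat.totient_mul (Nat.coprime_two_left.mpr hodd), Nat.totient_two, Nat.totient_prime hp]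
  ring
end

section
/- Let p be an odd prime, s ∈ (ℤ/2pℤ)ˣ with s ≠ 1 and multiplicative order m, with m even. For the permutation σ(j) = s·j + 1 of ℤ/2pℤ, every j with (s-1)·j + 1 ≠ p lies in a σ-orbit of size exactly m. -/
open Finset

section aux

variable (p : ℕ)

lemma aux_inj (hp : p.Prime) (hodd : Odd p) (x : ZMod (2 * p))
    (h2 : (x.val : ZMod 2) = 0) (hpz : (x.val : ZMod p) = 0) : x = 0 := by
  haveI : NeZero (2 * p) := ⟨by have := hp.pos; omega⟩
  have d2 : 2 ∣ x.val := (ZMod.natCast_eq_zero_iff _ _).mp h2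
  have dp : p ∣ x.val := (ZMod.natCast_eq_zero_iff _ _).mp hpz
  have hcop : Nat.Coprime 2 p := by
    have : p ≠ 2 := by rintro rfl; exact (Nat.not_odd_iff_even.mpr (by decide)) hodd
    exact (Nat.coprime_primes Nat.prime_two hp).mpr (Ne.symm this)
  have : (2 * p) ∣ x.val := hcop.mul_dvd_of_dvd_of_dvd d2 dp
  calc x = (x.val : ZMod (2 * p)) := (ZMod.natCast_zmod_val x).symm
    _ = 0 := (ZMod.natCast_eq_zero_iff _ _).mpr this

end aux

theorem stmt16 (p : ℕ) (hp : p.Prime) (hodd : Odd p)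
    (s : (ZMod (2 * p))ˣ) (hs : (s : ZMod (2 * p)) ≠ 1)
    (hm : Even (orderOf s))
    (j : ZMod (2 * p)) (hj : ((s : ZMod (2 * p)) - 1) * j + 1 ≠ (p : ZMod (2 * p))) :
    Function.minimalPeriod (fun x : ZMod (2 * p) => (s : ZMod (2 * p)) * x + 1) j =
      orderOf s := by
  haveI : NeZero (2 * p) := ⟨by have := hp.pos; omega⟩
  haveI : Fact p.Prime := ⟨hp⟩
  set S : ZMod (2 * p) := (s : ZMod (2 * p)) with hS
  set f : ZMod (2 * p) → ZMod (2 * p) := fun x => S * x + 1 with hf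
  set m := orderOf s with hmdef
  have hm0 : 0 < m := orderOf_pos s
  -- cast homs
  have h2dvd : (2 : ℕ) ∣ 2 * p := ⟨p, rfl⟩
  have hpdvd : p ∣ 2 * p := ⟨2, (mul_comm 2 p)⟩
  set g2 : ZMod (2 * p) →+* ZMod 2 := ZMod.castHom h2dvd (ZMod 2) with hg2
  set gp : ZMod (2 * p) →+* ZMod p := ZMod.castHom hpdvd (ZMod p) with hgp
  have hcast2 : ∀ x : ZMod (2 * p), g2 x = (x.val : ZMod 2) := by
    intro x
    conv_lhs => rw [← ZMod.natCast_zmod_val x]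
    rw [map_natCast]
  have hcastp : ∀ x : ZMod (2 * p), gp x = (x.val : ZMod p) := by
    intro x
    conv_lhs => rw [← ZMod.natCast_zmod_val x]
    rw [map_natCast]
  have inj : ∀ x : ZMod (2 * p), g2 x = 0 → gp x = 0 → x = 0 := by
    intro x a b
    exact aux_inj p hp hodd x (by rw [← hcast2]; exact a) (by rw [← hcastp]; exact b)
  -- s mod 2 is 1
  have hs2 : g2 S = 1 := by
    have h : ∀ y : ZMod 2, IsUnit y → y = 1 := by decide
    exact h _ ((Units.isUnit s).map g2)
  -- s mod p ≠ 1
  have hsp : gp S ≠ 1 := by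
    intro h
    apply hs
    have : S - 1 = 0 := inj _ (by simp [hs2]) (by simp [h])
    linear_combination this
  -- s^m = 1 in ring
  have hSm : S ^ m = 1 := by
    have := pow_orderOf_eq_one s
    have : ((s ^ m : (ZMod (2*p))ˣ) : ZMod (2*p)) = ((1 : (ZMod (2*p))ˣ) : ZMod (2*p)) := by
      rw [this]
    simpa using this
  -- iterate formula
  have hiter : ∀ k, f^[k] j = S ^ k * j + ∑ i ∈ range k, S ^ i := by
    intro k
    induction k with
    | zero => simp
    | succ k ih =>
      rw [Function.iterate_succ_apply', ih, geom_sum_succ]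
      simp only [hf]
      ring
  -- geometric sum at m is zero
  have hgeom : (∑ i ∈ range m, S ^ i) = 0 := by
    apply inj
    · rw [map_sum]
      simp only [map_pow, hs2, one_pow]
      simp only [Finset.sum_const, card_range, nsmul_eq_mul, mul_one]
      obtain ⟨t, ht⟩ := hm
      rw [ht]
      have h2 : (2 : ZMod 2) = 0 := rfl
      push_cast
      linear_combination (t : ZMod 2) * h2
    · rw [map_sum]
      simp only [map_pow]
      have := geom_sum_eq hsp m
      rw [this]
      have : (gp S) ^ m = 1 := by rw [← map_pow, hSm, map_one]
      rw [this]
      simp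
  -- m is a period
  have hper : Function.IsPeriodicPt f m j := by
    unfold Function.IsPeriodicPt Function.IsFixedPt
    rw [hiter, hSm, hgeom]
    ring
  -- no smaller positive period
  have hno : ∀ k, 0 < k → k < m → ¬ Function.IsPeriodicPt f k j := by
    intro k hk0 hkm hpk
    have heq : S ^ k * j + ∑ i ∈ range k, S ^ i = j := by
      have := hpk
      unfold Function.IsPeriodicPt Function.IsFixedPt at this
      rw [hiter] at this
      exact this
    -- multiply by (S - 1)
    have key : (S ^ k - 1) * ((S - 1) * j + 1) = 0 := by
      have h1 : (∑ i ∈ range k, S ^ i) * (S - 1) = S ^ k - 1 := geom_sum_mul S k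
      linear_combination (S - 1) * heq - h1
    set a : ZMod (2 * p) := (S - 1) * j + 1 with ha
    -- t^k ≠ 1 mod p
    have htk : (gp S) ^ k ≠ 1 := by
      intro h
      have hSk : S ^ k = 1 := by
        have : S ^ k - 1 = 0 := by
          apply inj
          · simp [map_pow, hs2]
          · simp [map_pow, h]
        linear_combination this
      have : s ^ k = 1 := Units.ext (by simpa using hSk)
      have := orderOf_dvd_of_pow_eq_one this
      rw [← hmdef] at this
      exact absurd (Nat.le_of_dvd hk0 this) (not_le.mpr hkm)
    -- a ≡ 0 mod p
    have hap : gp a = 0 := by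
      have := congrArg gp key
      simp only [map_mul, map_sub, map_pow, map_one, map_zero] at this
      rcases mul_eq_zero.mp this with h | h
      · exact absurd (by linear_combination h : (gp S) ^ k = 1) htk
      · exact h
    -- a ≡ 1 mod 2
    have ha2 : g2 a = 1 := by
      simp only [ha, map_add, map_mul, map_sub, map_one, hs2]
      ring
    -- p mod 2 = 1
    have hp2 : ((p : ZMod (2*p)).val : ZMod 2) = 1 := by
      have : g2 (p : ZMod (2*p)) = (1 : ZMod 2) := by
        rw [map_natCast]
        obtain ⟨t, ht⟩ := hodd
        have h2 : (2 : ZMod 2) = 0 := rfl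
        rw [ht]; push_cast; linear_combination (t : ZMod 2) * h2
      rw [← hcast2]; exact this
    have hpp : ((p : ZMod (2*p)).val : ZMod p) = 0 := by
      have : gp (p : ZMod (2*p)) = 0 := by rw [map_natCast]; simp
      rw [← hcastp]; exact this
    -- hence a = p
    have : a - (p : ZMod (2*p)) = 0 := by
      apply inj
      · rw [map_sub, ha2, hcast2, hp2]; ring
      · rw [map_sub, hap, hcastp, hpp]; ring
    exact hj (by linear_combination this)
  -- conclude
  have hd := hper.minimalPeriod_dvd
  have hdpos : 0 < Function.minimalPeriod f j :=
    hper.minimalPeriod_pos hm0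
  rcases lt_or_eq_of_le (Nat.le_of_dvd hm0 hd) with h | h
  · exact absurd (Function.isPeriodicPt_minimalPeriod f j) (hno _ hdpos h)
  · exact h
end

section
/- Let p be an odd prime, s ∈ (ℤ/2pℤ)ˣ with s ≠ 1 and multiplicative order m, with m odd. For the permutation σ(j) = s·j + 1 of ℤ/2pℤ, every j with (s-1)·j + 1 ≠ p lies in a σ-orbit of size exactly 2m. -/
theorem stmt17 (p : ℕ) (hp : p.Prime) (hodd : Odd p)
    (s : (ZMod (2 * p))ˣ) (hs : (s : ZMod (2 * p)) ≠ 1)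
    (hm : Odd (orderOf s))
    (j : ZMod (2 * p)) (hj : ((s : ZMod (2 * p)) - 1) * j + 1 ≠ (p : ZMod (2 * p))) :
    Function.minimalPeriod (fun x : ZMod (2 * p) => (s : ZMod (2 * p)) * x + 1) j =
      2 * orderOf s := by
  haveI : Fact p.Prime := ⟨hp⟩
  haveI : NeZero (2 * p) := ⟨Nat.mul_ne_zero two_ne_zero hp.pos.ne'⟩
  have hcop : Nat.Coprime 2 p :=
    (Nat.prime_two.coprime_iff_not_dvd).mpr (Nat.two_dvd_ne_zero.mpr (Nat.odd_iff.mp hodd))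
  set m := orderOf s with hmdef
  set f : ZMod (2 * p) → ZMod (2 * p) := fun x => (s : ZMod (2 * p)) * x + 1 with hf
  set φ₂ : ZMod (2 * p) →+* ZMod 2 := ZMod.castHom ⟨p, rfl⟩ (ZMod 2) with hφ₂
  set φp : ZMod (2 * p) →+* ZMod p := ZMod.castHom (dvd_mul_left p 2) (ZMod p) with hφp
  -- injectivity of the pair of casts
  have hinj : ∀ x y : ZMod (2 * p), φ₂ x = φ₂ y → φp x = φp y → x = y := by
    intro x y h2 hpp
    apply (ZMod.chineseRemainder hcop).injective
    have e2 : ∀ z : ZMod (2 * p), (ZMod.chineseRemainder hcop z).1 = φ₂ z := by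
      intro z
      show (ZMod.cast z : ZMod 2 × ZMod p).1 = _
      rw [Prod.fst_zmod_cast]; rfl
    have ep : ∀ z : ZMod (2 * p), (ZMod.chineseRemainder hcop z).2 = φp z := by
      intro z
      show (ZMod.cast z : ZMod 2 × ZMod p).2 = _
      rw [Prod.snd_zmod_cast]; rfl
    exact Prod.ext (by rw [e2, e2, h2]) (by rw [ep, ep, hpp])
  -- s mod 2 is 1
  have hs2 : φ₂ (s : ZMod (2 * p)) = 1 := by
    have hu : IsUnit (φ₂ (s : ZMod (2 * p))) := (s.isUnit).map φ₂
    have : ∀ a : ZMod 2, a ≠ 0 → a = 1 := by decide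
    exact this _ hu.ne_zero
  -- p mod 2 is 1
  have hp2 : ((p : ℕ) : ZMod 2) = 1 := by
    rw [← ZMod.natCast_mod p 2, Nat.odd_iff.mp hodd, Nat.cast_one]
  -- s^m = 1 as an element
  have hsm : (s : ZMod (2 * p)) ^ m = 1 := by
    have : (s : (ZMod (2 * p))ˣ) ^ m = 1 := pow_orderOf_eq_one s
    calc (s : ZMod (2 * p)) ^ m = ((s ^ m : (ZMod (2 * p))ˣ) : ZMod (2 * p)) := by
          rw [Units.val_pow_eq_pow_val]
      _ = 1 := by rw [this]; rfl
  -- iterate formula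
  have hiter : ∀ k, f^[k] j = (s : ZMod (2 * p)) ^ k * j +
      ∑ i ∈ Finset.range k, (s : ZMod (2 * p)) ^ i := by
    intro k
    induction k with
    | zero => simp
    | succ k ih =>
      rw [Function.iterate_succ_apply', ih, geom_sum_succ]
      show (s : ZMod (2 * p)) * _ + 1 = _
      ring
  -- key: any period is divisible by 2m
  have key : ∀ k, Function.IsPeriodicPt f k j → 2 * m ∣ k := by
    intro k hk
    have heq : ((s : ZMod (2 * p)) ^ k - 1) * j +
        ∑ i ∈ Finset.range k, (s : ZMod (2 * p)) ^ i = 0 := by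
      have := hk
      unfold Function.IsPeriodicPt Function.IsFixedPt at this
      rw [hiter k] at this
      linear_combination this
    -- mod 2 : k is even
    have h2dvd : 2 ∣ k := by
      have := congrArg φ₂ heq
      simp only [map_add, map_mul, map_sub, map_pow, map_sum, map_one, map_zero, hs2,
        one_pow, sub_self, zero_mul, zero_add, Finset.sum_const, Finset.card_range,
        nsmul_eq_mul, mul_one] at this
      exact (ZMod.natCast_eq_zero_iff k 2).mp this
    -- mod p : m ∣ k
    have hmdvd : m ∣ k := by
      set t : ZMod p := φp (s : ZMod (2 * p)) with ht
      set u : ZMod p := φp j with hu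
      have heqp : (t ^ k - 1) * u + ∑ i ∈ Finset.range k, t ^ i = 0 := by
        have := congrArg φp heq
        simpa only [map_add, map_mul, map_sub, map_pow, map_sum, map_one, map_zero] using this
      have hfac : (t ^ k - 1) * ((t - 1) * u + 1) = 0 := by
        have gs := geom_sum_mul t k
        linear_combination (t - 1) * heqp - gs
      have hne : (t - 1) * u + 1 ≠ 0 := by
        intro h0
        apply hj
        apply hinj
        · rw [map_natCast]
          simp only [map_add, map_mul, map_sub, map_one, hs2, sub_self, zero_mul, zero_add]
          exact hp2.symm
        · simp only [map_add, map_mul, map_sub, map_one, map_natCast, ZMod.natCast_self]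
          exact h0
      have htk : t ^ k = 1 := by
        rcases mul_eq_zero.mp hfac with h | h
        · exact sub_eq_zero.mp h
        · exact absurd h hne
      have hsk : (s : ZMod (2 * p)) ^ k = 1 := by
        apply hinj
        · simp [map_pow, hs2]
        · simp only [map_pow, map_one]
          exact htk
      have := orderOf_dvd_of_pow_eq_one hsk
      rwa [orderOf_units] at this
    exact Nat.Coprime.mul_dvd_of_dvd_of_dvd
      ((Nat.prime_two.coprime_iff_not_dvd).mpr
        (Nat.two_dvd_ne_zero.mpr (Nat.odd_iff.mp hm))) h2dvd hmdvd
  -- 2m is a period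
  have hper : Function.IsPeriodicPt f (2 * m) j := by
    unfold Function.IsPeriodicPt Function.IsFixedPt
    rw [hiter]
    have hs2m : (s : ZMod (2 * p)) ^ (2 * m) = 1 := by
      rw [show 2 * m = m * 2 from mul_comm 2 m, pow_mul, hsm, one_pow]
    have hsum : ∑ i ∈ Finset.range (2 * m), (s : ZMod (2 * p)) ^ i = 0 := by
      apply hinj
      · simp only [map_sum, map_pow, hs2, one_pow, Finset.sum_const, Finset.card_range,
          nsmul_eq_mul, mul_one, map_zero]
        exact (ZMod.natCast_eq_zero_iff (2 * m) 2).mpr ⟨m, rfl⟩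
      · have gs := geom_sum_mul (φp (s : ZMod (2 * p))) (2 * m)
        have h1 : (φp (s : ZMod (2 * p))) ^ (2 * m) = 1 := by
          rw [← map_pow, hs2m, map_one]
        rw [h1, sub_self] at gs
        have htne : φp (s : ZMod (2 * p)) - 1 ≠ 0 := by
          intro h0
          apply hs
          apply hinj
          · rw [hs2, map_one]
          · rw [map_one]; exact sub_eq_zero.mp h0
        have := mul_eq_zero.mp gs
        rcases this with h | h
        · rw [map_sum, map_zero]
          simpa [map_pow] using h
        · exact absurd h htne
    rw [hs2m, one_mul, hsum, add_zero]
  have h1 : Function.minimalPeriod f j ∣ 2 * m := hper.minimalPeriod_dvd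
  have h2 : 2 * m ∣ Function.minimalPeriod f j := by
    apply key
    apply Function.isPeriodicPt_minimalPeriod
  exact Nat.dvd_antisymm h1 h2
end
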